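/- arXiv:2112.01095 — 4 statements merged into one kernel-verified Lean document; each statement's English description precedes it below -/
import Mathlib

section
/- Let n ≥ 3 be odd. For 0 ≤ k < n define δ_k = {(k+2i) mod n : 0 ≤ i ≤ ⌊n/2⌋} ⊆ {0,…,n−1}, and let x^{δ_k} ∈ ℝ^n be the incidence vector. Then the n vectors x^{δ_0},…,x^{δ_{n−1}} are affinely independent, each has exactly ⌈n/2⌉ ones, and each δ_k contains two cyclically consecutive indices. -/
/-!
Membership `m ∈ δ_k` means that `m - k ∈ ZMod n` has an even representative in `[0, n)`.
For odd `n`, of two cyclic neighbours `a, a + 1` at least one has an even representative, and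
both do exactly when `a = -1` (representative `n - 1`). Hence the index sets
`A_j = {k | j ∈ δ_k}` and `A_{j+1}` cover `Fin n` and meet only in `j + 1`. If `∑ w = 0` and
`∑ w_k x^{δ_k} = 0`, i.e. `∑_{A_j} w = 0` for every `j`, inclusion–exclusion gives `w_{j+1} = 0`.
-/

open Finset

theorem Nat.count_even (n : ℕ) : Nat.count Even n = (n + 1) / 2 := by
  induction n with
  | zero => rfl
  | succ n ih =>
    rw [Nat.count_succ, ih]
    rcases Nat.even_or_odd n with h | h
    · rw [if_pos h]
      rw [Nat.even_iff] at h
      omega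
    · rw [if_neg (Nat.not_even_iff_odd.2 h)]
      rw [Nat.odd_iff] at h
      omega

namespace Fin

theorem card_filter_even_val (n : ℕ) : #{v : Fin n | Even v.val} = (n + 1) / 2 := by
  rw [← Nat.count_even, Nat.count_eq_card_filter_range, ← Nat.Iio_eq_range,
    ← map_valEmbedding_univ, filter_map, card_map]
  rfl

theorem sum_smul_indicator_even_val_sub {n : ℕ} {R : Type*} [Semiring R] (w : Fin n → R)
    (j : Fin n) :
    (∑ k, w k • Set.indicator {m : Fin n | Even (m - k).val} (fun _ => (1 : R))) j =
      ∑ k with Even (j - k).val, w k := by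
  simp [Finset.sum_apply, Set.indicator_apply, Finset.sum_filter]

variable {n : ℕ} [NeZero n]

theorem ncard_setOf_even_val_sub (k : Fin n) :
    {m : Fin n | Even (m - k).val}.ncard = (n + 1) / 2 := by
  rw [← coe_filter_univ, Set.ncard_coe_finset, ← card_filter_even_val n]
  exact card_equiv (Equiv.subRight k) (by simp)

theorem exists_le_half_eq_add_ofNat_two_mul_iff (k m : Fin n) :
    (∃ i ≤ n / 2, m = k + Fin.ofNat n (2 * i)) ↔ Even (m - k).val := by
  simp only [← sub_eq_iff_eq_add']
  constructor
  · rintro ⟨i, hi, h⟩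
    rw [h, val_ofNat]
    rcases (show 2 * i < n ∨ 2 * i = n by omega) with h2i | h2i
    · rw [Nat.mod_eq_of_lt h2i]
      exact even_two_mul i
    · rw [h2i, Nat.mod_self]
      exact Even.zero
  · rintro ⟨i, hi⟩
    refine ⟨i, by omega, ?_⟩
    rw [← two_mul] at hi
    rw [← hi, ofNat_val_eq_self]

theorem val_add_one_eq_iff_eq_neg_one (a : Fin n) : a.val + 1 = n ↔ a = -1 := by
  rw [eq_neg_iff_add_eq_zero, ← val_eq_zero_iff, val_add, val_one', Nat.add_mod_mod]
  constructor
  · intro h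
    rw [h, Nat.mod_self]
  · intro h
    by_contra hne
    rw [Nat.mod_eq_of_lt (by omega)] at h
    omega

theorem val_add_one_of_ne_neg_one {a : Fin n} (ha : a ≠ -1) : (a + 1).val = a.val + 1 :=
  val_add_one_of_lt' (lt_of_le_of_ne a.isLt (mt (val_add_one_eq_iff_eq_neg_one a).1 ha))

theorem even_val_neg_one (hn : Odd n) : Even (-1 : Fin n).val := by
  have h := (val_add_one_eq_iff_eq_neg_one (-1 : Fin n)).2 rfl
  rw [Nat.even_iff]
  rw [Nat.odd_iff] at hn
  omega

theorem even_val_or_even_val_add_one (hn : Odd n) (a : Fin n) :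
    Even a.val ∨ Even (a + 1).val := by
  by_cases ha : a = -1
  · exact .inl (ha ▸ even_val_neg_one hn)
  · rw [val_add_one_of_ne_neg_one ha]
    exact (Nat.even_or_odd _).imp_right Odd.add_one

theorem even_val_and_even_val_add_one_iff (hn : Odd n) (a : Fin n) :
    Even a.val ∧ Even (a + 1).val ↔ a = -1 := by
  refine ⟨fun ⟨h, h'⟩ => ?_, ?_⟩
  · by_contra ha
    rw [val_add_one_of_ne_neg_one ha, Nat.even_add_one] at h'
    exact h' h
  · rintro rfl
    exact ⟨even_val_neg_one hn, by simp⟩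

theorem eq_zero_of_sum_filter_even_val_sub_eq_zero {M : Type*} [AddCommGroup M] (hn : Odd n)
    {w : Fin n → M} (hw : ∑ k, w k = 0) (hsum : ∀ j, ∑ k with Even (j - k).val, w k = 0)
    (i : Fin n) : w i = 0 := by
  obtain ⟨j, rfl⟩ : ∃ j, i = j + 1 := ⟨i - 1, by abel⟩
  set A : Finset (Fin n) := {k | Even (j - k).val}
  set B : Finset (Fin n) := {k | Even (j + 1 - k).val}
  have hunion : A ∪ B = univ := by
    ext k
    simpa [A, B, add_sub_right_comm j] using even_val_or_even_val_add_one hn (j - k)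
  have hinter : A ∩ B = {j + 1} := by
    ext k
    have hk : j - k = -1 ↔ k = j + 1 := by grind
    simpa [A, B, add_sub_right_comm j, hk] using even_val_and_even_val_add_one_iff hn (j - k)
  have := sum_union_inter (s₁ := A) (s₂ := B) (f := w)
  rwa [hunion, hinter, sum_singleton, hw, hsum, hsum, zero_add, add_zero] at this

theorem affineIndependent_indicator_even_val_sub {R : Type*} [Ring R] (hn : Odd n) :
    AffineIndependent R fun k : Fin n =>
      Set.indicator {m : Fin n | Even (m - k).val} (fun _ => (1 : R)) := by
  rw [affineIndependent_iff_of_fintype]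
  intro w hw hcomb
  rw [weightedVSub_eq_linear_combination _ hw] at hcomb
  refine eq_zero_of_sum_filter_even_val_sub_eq_zero hn hw fun j => ?_
  rw [← sum_smul_indicator_even_val_sub, hcomb, Pi.zero_apply]

end Fin

theorem circular_star_multicuts_affine_independent_general (n : ℕ) [NeZero n]
    (hodd : Odd n)
    (D : Fin n → Set (Fin n))
    (hD : ∀ k : Fin n, D k = {m : Fin n | ∃ i : ℕ, i ≤ n / 2 ∧ m = k + (Fin.ofNat n (2 * i : ℕ))}) :
    AffineIndependent ℝ
      (fun k : Fin n => fun j : Fin n => Set.indicator (D k) (fun _ => (1 : ℝ)) j) ∧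
    (∀ k : Fin n, (D k).ncard = (n + 1) / 2) ∧
    (∀ k : Fin n, ∃ j : Fin n, j ∈ D k ∧ j + 1 ∈ D k) := by
  obtain rfl : D = fun k => {m | Even (m - k).val} :=
    funext fun k => (hD k).trans (Set.ext (Fin.exists_le_half_eq_add_ofNat_two_mul_iff k))
  refine ⟨Fin.affineIndependent_indicator_even_val_sub hodd, Fin.ncard_setOf_even_val_sub,
    fun k => ⟨k - 1, ?_, ?_⟩⟩
  · simpa using Fin.even_val_neg_one hodd
  · simp

/-- For odd `n ≥ 3` and `0 ≤ k < n`, let `δ_k = {(k+2i) mod n : 0 ≤ i ≤ ⌊n/2⌋}`.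
Then the `n` incidence vectors `x^{δ_0}, …, x^{δ_{n-1}}` are affinely
independent, each `δ_k` has exactly `⌈n/2⌉` elements, and each `δ_k` contains
two cyclically consecutive indices. -/
theorem circular_star_multicuts_affine_independent (n : ℕ) [NeZero n]
    (hn : 3 ≤ n) (hodd : Odd n)
    (D : Fin n → Set (Fin n))
    (hD : ∀ k : Fin n, D k = {m : Fin n | ∃ i : ℕ, i ≤ n / 2 ∧ m = k + (Fin.ofNat n (2 * i : ℕ))}) :
    AffineIndependent ℝ
      (fun k : Fin n => fun j : Fin n => Set.indicator (D k) (fun _ => (1 : ℝ)) j) ∧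
    (∀ k : Fin n, (D k).ncard = (n + 1) / 2) ∧
    (∀ k : Fin n, ∃ j : Fin n, j ∈ D k ∧ j + 1 ∈ D k) :=
  circular_star_multicuts_affine_independent_general n hodd D hD
end

section
/- The n incidence vectors x^{E \ {e_0}}, …, x^{E \ {e_{n−1}}} ∈ ℝ^n (each having a single zero entry in position i) are affinely independent, and each satisfies ∑_i x_i = n−1. Hence ∑_{e} x_e ≥ n−1 defines a facet (a face of dimension n−1) of the n-dimensional multicut dominant of the star with all leaf pairs as terminals. -/
/-- The `n` incidence vectors `x^{E \ {e_i}}` (all-ones except a single `0` in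
position `i`) are affinely independent and each satisfies `∑_j x_j = n − 1`;
their affine span has dimension `n − 1`, so the complete `n`-star inequality
`∑_e x_e ≥ n−1` defines a facet (a face of dimension `n−1`) of the
`n`-dimensional multicut dominant of the star with all leaf pairs as terminals. -/
theorem complete_star_facet (n : ℕ) (hn : 1 ≤ n)
    (y : Fin n → Fin n → ℝ) (hy : ∀ i j : Fin n, y i j = if j = i then 0 else 1) :
    AffineIndependent ℝ y ∧
    (∀ i : Fin n, ∑ j : Fin n, y i j = (n : ℝ) - 1) ∧
    Module.finrank ℝ (affineSpan ℝ (Set.range y)).direction = n - 1 := by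
  have hai : AffineIndependent ℝ y := by
    rw [affineIndependent_iff_of_fintype]
    intro w hw hsum i
    rw [Finset.univ.weightedVSub_eq_linear_combination hw] at hsum
    have h := congrFun hsum i
    simp only [Finset.sum_apply, Pi.smul_apply, hy, smul_eq_mul, Pi.zero_apply] at h
    have h2 : ∑ j : Fin n, w j * (if i = j then 0 else 1)
        = (∑ j : Fin n, w j) - w i := by
      have : ∀ j : Fin n, w j * (if i = j then (0:ℝ) else 1)
          = w j - (if i = j then w j else 0) := by
        intro j; by_cases hj : i = j <;> simp [hj]
      rw [Finset.sum_congr rfl (fun j _ => this j), Finset.sum_sub_distrib,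
        Finset.sum_ite_eq Finset.univ i w]
      simp
    rw [h2, hw] at h
    linarith
  refine ⟨hai, ?_, ?_⟩
  · intro i
    simp only [hy]
    calc (∑ x : Fin n, if x = i then (0:ℝ) else 1)
        = ∑ x : Fin n, ((1:ℝ) - if x = i then 1 else 0) := by
          apply Finset.sum_congr rfl; intro x _; by_cases h : x = i <;> simp [h]
      _ = (n:ℝ) - 1 := by
          rw [Finset.sum_sub_distrib, Finset.sum_ite_eq' Finset.univ i]
          simp
  · rw [direction_affineSpan]
    obtain ⟨m, rfl⟩ := Nat.exists_eq_add_of_le hn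
    have := hai.finrank_vectorSpan (n := m) (by simp [Nat.add_comm])
    rw [this]
    omega
end

section
/- Let T_n be the tree with root r, children v_1,…,v_n of r, and leaves s_{i,j} (child of v_i) and t_{i,j} (child of v_j) for 1 ≤ i < j ≤ n; let S_n = {{s_{i,j}, t_{i,j}} : 1 ≤ i < j ≤ n}. For every minimal S_n-multicut δ with exactly ℓ edges among {r v_1,…,r v_n}, δ contains exactly C(n−ℓ, 2) leaf edges. Consequently, for any 2 ≤ k < n, (n−k)·|δ ∩ L_1| + |δ ∩ L_2| ≥ k(n−k) + C(n−k,2), with equality if and only if ℓ ∈ {k−1, k}. -/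
lemma two_mul_choose_two' (a : ℕ) : 2 * a.choose 2 + a = a * a := by
  induction a with
  | zero => simp
  | succ b ih =>
    rw [Nat.choose_succ_succ, Nat.choose_one_right]
    nlinarith [ih]

lemma two_mul_choose_two (a : ℕ) : 2 * a.choose 2 = a * a - a := by
  have := two_mul_choose_two' a; omega

lemma arith_lemma (n k ℓ : ℕ) (hk2 : 2 ≤ k) (hkn : k < n) (hl : ℓ ≤ n) :
    k * (n - k) + Nat.choose (n - k) 2 ≤ (n - k) * ℓ + Nat.choose (n - ℓ) 2 ∧
    ((n - k) * ℓ + Nat.choose (n - ℓ) 2 = k * (n - k) + Nat.choose (n - k) 2 ↔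
      ℓ = k - 1 ∨ ℓ = k) := by
  have hC := two_mul_choose_two (n - k)
  have hA := two_mul_choose_two (n - ℓ)
  have hCle : (n-k) ≤ (n-k)*(n-k) := Nat.le_mul_of_pos_left _ (by omega)
  have hAle : (n-ℓ) ≤ (n-ℓ)*(n-ℓ) := by
    rcases Nat.eq_zero_or_pos (n-ℓ) with h | h
    · simp [h]
    · exact Nat.le_mul_of_pos_left _ h
  zify [hkn.le, hl, hCle, hAle] at hC hA ⊢
  have hd : (0:ℤ) ≤ ((k:ℤ) - ℓ) * ((k:ℤ) - ℓ - 1) := by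
    rcases le_or_gt (k:ℤ) ℓ with h | h
    · nlinarith
    · exact mul_nonneg (by linarith) (by linarith)
  constructor
  · nlinarith [hd, hC, hA]
  · constructor
    · intro heq
      have h0 : ((k:ℤ) - ℓ) * ((k:ℤ) - ℓ - 1) = 0 := by
        linear_combination 2*heq - hA + hC
      rcases mul_eq_zero.mp h0 with h | h
      · right; omega
      · left; omega
    · intro h
      have h2 : (2:ℤ) * ((↑n - ↑k) * ↑ℓ + ↑((n - ℓ).choose 2)) =
          2 * (↑k * (↑n - ↑k) + ↑((n - k).choose 2)) := by
        rcases h with h | h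
        · have hthis : (ℓ:ℤ) = k - 1 := by omega
          linear_combination hA - hC - ((k:ℤ) - ℓ) * hthis
        · have hthis : (ℓ:ℤ) = k := by omega
          linear_combination hA - hC + ((ℓ:ℤ) - k + 1) * hthis
      linarith


/-- In the tree `T_n` (root `r`, children `v_1,…,v_n`, leaves `s_{i,j}` under `v_i`
and `t_{i,j}` under `v_j`) with terminal pairs `S_n = {{s_{i,j}, t_{i,j}}}`, edges
are encoded as `Sum.inl i` (the edge `r v_i`, i.e. an `L_1`-edge) and
`Sum.inr (i, j, b)` (the leaf edges `e_{i,j}` for `b = false` and `f_{i,j}` for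
`b = true`, the `L_2`-edges). `sep γ` says that `γ` separates every terminal pair.
For every minimal multicut `δ` with exactly `ℓ` edges in `L_1`, the number `m` of
`L_2`-edges of `δ` is exactly `C(n−ℓ,2)`; consequently for any `2 ≤ k < n` we
have `(n−k)·ℓ + m ≥ k(n−k) + C(n−k,2)`, with equality iff `ℓ ∈ {k−1, k}`. -/
theorem tree_inequality_minimal_multicut (n k : ℕ) (hk2 : 2 ≤ k) (hkn : k < n)
    (δ : Finset (Fin n ⊕ Fin n × Fin n × Bool))
    (sep : Finset (Fin n ⊕ Fin n × Fin n × Bool) → Prop)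
    (hsep : ∀ γ, sep γ ↔ ∀ i j : Fin n, i < j →
      Sum.inl i ∈ γ ∨ Sum.inl j ∈ γ ∨
        Sum.inr (i, j, false) ∈ γ ∨ Sum.inr (i, j, true) ∈ γ)
    (hδ : sep δ) (hmin : ∀ γ ⊂ δ, ¬ sep γ)
    (ℓ m : ℕ)
    (hℓ : ℓ = (δ.filter (fun x => x.isLeft = true)).card)
    (hm : m = (δ.filter (fun x => x.isLeft = false)).card) :
    m = Nat.choose (n - ℓ) 2 ∧
    k * (n - k) + Nat.choose (n - k) 2 ≤ (n - k) * ℓ + m ∧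
    ((n - k) * ℓ + m = k * (n - k) + Nat.choose (n - k) 2 ↔ ℓ = k - 1 ∨ ℓ = k) := by
  have hmain : m = Nat.choose (n - ℓ) 2 ∧ ℓ ≤ n := by
    classical
    have hsepδ := (hsep δ).mp hδ
    have hmin' : ∀ e ∈ δ, ¬ sep (δ.erase e) := fun e he =>
      hmin _ (Finset.erase_ssubset he)
    have factA : ∀ i j : Fin n, ∀ b : Bool, Sum.inr (i, j, b) ∈ δ →
        i < j ∧ Sum.inl i ∉ δ ∧ Sum.inl j ∉ δ ∧ Sum.inr (i, j, !b) ∉ δ := by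
      intro i j b hmem
      have h1 := hmin' _ hmem
      rw [hsep] at h1
      push_neg at h1
      obtain ⟨i', j', hlt, e1, e2, e3, e4⟩ := h1
      rw [Finset.mem_erase] at e1 e2 e3 e4
      push_neg at e1 e2 e3 e4
      have key : i' = i ∧ j' = j := by
        rcases hsepδ i' j' hlt with h | h | h | h
        · exact absurd h (e1 (by simp))
        · exact absurd h (e2 (by simp))
        · rcases eq_or_ne (Sum.inr (i', j', false) : Fin n ⊕ Fin n × Fin n × Bool)
            (Sum.inr (i, j, b)) with hc | hc
          · simp only [Sum.inr.injEq, Prod.mk.injEq] at hc; exact ⟨hc.1, hc.2.1⟩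
          · exact absurd h (e3 hc)
        · rcases eq_or_ne (Sum.inr (i', j', true) : Fin n ⊕ Fin n × Fin n × Bool)
            (Sum.inr (i, j, b)) with hc | hc
          · simp only [Sum.inr.injEq, Prod.mk.injEq] at hc; exact ⟨hc.1, hc.2.1⟩
          · exact absurd h (e4 hc)
      obtain ⟨rfl, rfl⟩ := key
      refine ⟨hlt, e1 (by simp), e2 (by simp), ?_⟩
      cases b
      · exact e4 (by simp)
      · exact e3 (by simp)
    -- the set of L1 indices
    set A : Finset (Fin n) := Finset.univ.filter (fun i => Sum.inl i ∈ δ) with hA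
    have himg : δ.filter (fun x => x.isLeft = true) = A.image Sum.inl := by
      ext x
      rcases x with i | p <;> simp [hA]
    have hℓA : ℓ = A.card := by
      rw [hℓ, himg, Finset.card_image_of_injective _ Sum.inl_injective]
    have hln : ℓ ≤ n := by
      rw [hℓA]
      simpa using Finset.card_le_card (Finset.subset_univ A)
    -- the complement set
    set S : Finset (Fin n) := Finset.univ.filter (fun i => Sum.inl i ∉ δ) with hS
    have hScard : S.card = n - ℓ := by
      have := Finset.card_filter_add_card_filter_not
        (s := (Finset.univ : Finset (Fin n))) (p := fun i => Sum.inl i ∈ δ)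
      simp only [Finset.card_univ, Fintype.card_fin] at this
      rw [hℓA, hS, hA]
      omega
    -- pairs
    set P : Finset (Fin n × Fin n) := Finset.univ.filter
      (fun p => p.1 < p.2 ∧ Sum.inl p.1 ∉ δ ∧ Sum.inl p.2 ∉ δ) with hP
    -- m = card P
    have hmP : m = P.card := by
      rw [hm]
      apply Finset.card_bij (fun e _ => Sum.elim (fun i => (i, i)) (fun p => (p.1, p.2.1)) e)
      · rintro (i | ⟨i, j, b⟩) he
        · simp at he
        · simp only [Finset.mem_filter] at he
          obtain ⟨hlt, h1, h2, _⟩ := factA i j b he.1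
          simp [hP, hlt, h1, h2]
      · rintro (i | ⟨i, j, b⟩) he (i' | ⟨i', j', b'⟩) he' heq
        · simp at he
        · simp at he
        · simp at he'
        · simp only [Sum.elim_inr, Prod.mk.injEq] at heq
          obtain ⟨rfl, rfl⟩ := heq
          simp only [Finset.mem_filter] at he he'
          have hb : b = b' := by
            by_contra hb
            have hb' : b' = !b := by cases b <;> cases b' <;> revert hb <;> decide
            exact (factA i j b he.1).2.2.2 (hb' ▸ he'.1)
          rw [hb]
      · rintro ⟨i, j⟩ hp
        simp only [hP, Finset.mem_filter, Finset.mem_univ, true_and] at hp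
        obtain ⟨hlt, h1, h2⟩ := hp
        rcases hsepδ i j hlt with h | h | h | h
        · exact absurd h h1
        · exact absurd h h2
        · exact ⟨Sum.inr (i, j, false), by simp [h], rfl⟩
        · exact ⟨Sum.inr (i, j, true), by simp [h], rfl⟩
    -- card P = choose
    have hPcard : P.card = Nat.choose (n - ℓ) 2 := by
      rw [← hScard, ← Finset.card_powersetCard 2 S]
      apply Finset.card_bij (fun p _ => ({p.1, p.2} : Finset (Fin n)))
      · rintro ⟨i, j⟩ hp
        simp only [hP, Finset.mem_filter, Finset.mem_univ, true_and] at hp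
        obtain ⟨hlt, h1, h2⟩ := hp
        rw [Finset.mem_powersetCard]
        refine ⟨?_, Finset.card_pair hlt.ne⟩
        intro x hx
        simp only [Finset.mem_insert, Finset.mem_singleton] at hx
        rcases hx with rfl | rfl <;> simp [hS, h1, h2]
      · rintro ⟨i, j⟩ hp ⟨i', j'⟩ hp' heq
        simp only [hP, Finset.mem_filter, Finset.mem_univ, true_and] at hp hp'
        have hi : i ∈ ({i', j'} : Finset (Fin n)) := heq ▸ (by simp)
        have hj : j ∈ ({i', j'} : Finset (Fin n)) := heq ▸ (by simp)
        have hi' : i' ∈ ({i, j} : Finset (Fin n)) := heq ▸ (by simp)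
        simp only [Finset.mem_insert, Finset.mem_singleton] at hi hj hi'
        have hlt1 : (i : ℕ) < (j : ℕ) := hp.1
        have hlt2 : (i' : ℕ) < (j' : ℕ) := hp'.1
        have vi : (i : ℕ) = (i' : ℕ) ∨ (i : ℕ) = (j' : ℕ) := by
          rcases hi with h | h
          · exact Or.inl (congrArg Fin.val h)
          · exact Or.inr (congrArg Fin.val h)
        have vj : (j : ℕ) = (i' : ℕ) ∨ (j : ℕ) = (j' : ℕ) := by
          rcases hj with h | h
          · exact Or.inl (congrArg Fin.val h)
          · exact Or.inr (congrArg Fin.val h)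
        have vi' : (i' : ℕ) = (i : ℕ) ∨ (i' : ℕ) = (j : ℕ) := by
          rcases hi' with h | h
          · exact Or.inl (congrArg Fin.val h)
          · exact Or.inr (congrArg Fin.val h)
        have h1 : (i : ℕ) = (i' : ℕ) := by omega
        have h2 : (j : ℕ) = (j' : ℕ) := by omega
        exact Prod.ext (Fin.ext h1) (Fin.ext h2)
      · intro s hs
        rw [Finset.mem_powersetCard] at hs
        obtain ⟨hsub, hcard⟩ := hs
        obtain ⟨a, b, hab, rfl⟩ := Finset.card_eq_two.mp hcard
        have ha : Sum.inl a ∉ δ := by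
          have := hsub (by simp : a ∈ ({a, b} : Finset (Fin n)))
          simpa [hS] using this
        have hb : Sum.inl b ∉ δ := by
          have := hsub (by simp : b ∈ ({a, b} : Finset (Fin n)))
          simpa [hS] using this
        rcases lt_or_gt_of_ne hab with h | h
        · exact ⟨(a, b), by simp [hP, h, ha, hb], rfl⟩
        · exact ⟨(b, a), by simp [hP, h, ha, hb], by rw [Finset.pair_comm]⟩
    exact ⟨hmP.trans hPcard, hln⟩
  obtain ⟨hm2, hln⟩ := hmain
  have har := arith_lemma n k ℓ hk2 hkn hln
  rw [hm2]
  exact ⟨rfl, har.1, har.2⟩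
end

section
/- Let n ≥ 5 be odd and consider the cycle C_{2n} on vertices v_0,…,v_{2n−1} with terminal pairs S = {{v_i, v_{i+n}} : 0 ≤ i < n}. Assign weight 1 to edges with odd index and weight 2 to edges with even index. Then every S-multicut has total weight at least 3. -/
/-- The cycle graph on `Fin m`, with vertex `i` adjacent to `i ± 1`. -/
def cycleG (m : ℕ) [NeZero m] : SimpleGraph (Fin m) :=
  SimpleGraph.fromRel (fun a b => b = a + 1)

/-!
Every edge weighs at least 1, so a multicut of weight below 3 has at most two edges, and if it
has two they are both odd; as `n` is odd, two odd edges are never antipodal. But a set of at most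
two edges without an antipodal pair misses one of the arcs of `n` consecutive edges, and walking
along that arc joins some `v_i` to `v_{i+n}`.
-/

open Fin.NatCast Fin.CommRing

namespace Fin

variable {m : ℕ}

theorem val_sub_add_val_eq_or (x y : Fin m) :
    (x - y).val + y.val = x.val ∨ (x - y).val + y.val = x.val + m := by
  rcases le_or_gt y x with h | h
  · left; rw [coe_sub_iff_le.mpr h]; omega
  · right; rw [coe_sub_iff_lt.mpr h]; omega

theorem val_add_one_eq_or [NeZero m] (y : Fin m) :
    (y + 1).val = y.val + 1 ∨ (y + 1).val + m = y.val + 1 := by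
  obtain ⟨k, rfl⟩ := Nat.exists_eq_succ_of_ne_zero (NeZero.ne m)
  rw [val_add_one]
  split_ifs with h
  · right; simp [h]
  · left; rfl

end Fin

section
variable {m : ℕ} [NeZero m]

theorem cycleG_adj_add_one (hm : 1 < m) (a : Fin m) : (cycleG m).Adj a (a + 1) := by
  refine (SimpleGraph.fromRel_adj _ _ _).mpr ⟨?_, Or.inl rfl⟩
  intro h
  have := congrArg Fin.val (left_eq_add.mp h)
  rw [Fin.val_one', Nat.mod_eq_of_lt hm] at this
  simp at this

theorem cycleG_edge_injective (hm : 2 < m) : Function.Injective fun a : Fin m => s(a, a + 1) := by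
  intro a b h
  rcases Sym2.eq_iff.mp h with ⟨hab, _⟩ | ⟨hab, hba⟩
  · exact hab
  · have h2 : ((2 : ℕ) : Fin m) = 0 := by
      have : a = a + 2 := by nth_rw 1 [hab]; rw [← hba]; ring
      simpa using this
    have := congrArg Fin.val h2
    rw [Fin.val_natCast, Nat.mod_eq_of_lt hm] at this
    simp at this

-- `k ≤ (e - i).val` says that edge `e` is not among the `k` edges following vertex `i`.
theorem cycleG_deleteEdges_reachable (hm : 2 < m) {δ : Set (Fin m)} (i : Fin m) {k : ℕ}
    (hk : k ≤ m) (h : ∀ e ∈ δ, k ≤ (e - i).val) :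
    ((cycleG m).deleteEdges ((fun e => s(e, e + 1)) '' δ)).Reachable i (i + k) := by
  induction k with
  | zero => simp
  | succ k ih =>
    refine (ih (by omega) fun e he => (h e he).trans' k.le_succ).trans
      (SimpleGraph.Adj.reachable ?_)
    rw [Nat.cast_succ, ← add_assoc, SimpleGraph.deleteEdges_adj,
      (cycleG_edge_injective hm).mem_set_image]
    refine ⟨cycleG_adj_add_one (by omega) _, fun hmem => ?_⟩
    have := h _ hmem
    rw [add_sub_cancel_left, Fin.val_natCast, Nat.mod_eq_of_lt (by omega)] at this
    omega

end

-- With `a ∈ δ`, the arc after `a` meets `δ` in `b` and the arc after `b` meets `δ` in `c`;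
-- `c = a` would make `a` and `b` antipodal.
theorem three_le_card_of_forall_exists_val_sub_lt {n : ℕ} [NeZero (2 * n)]
    {δ : Finset (Fin (2 * n))}
    (harc : ∀ i, ∃ e ∈ δ, (e - i).val < n) (hanti : ∀ a ∈ δ, ∀ b ∈ δ, (b - a).val ≠ n) :
    3 ≤ δ.card := by
  obtain ⟨a, ha, -⟩ := harc 0
  obtain ⟨b, hb, hab⟩ := harc (a + 1)
  obtain ⟨c, hc, hbc⟩ := harc (b + 1)
  have := hanti a ha b hb
  have := Fin.val_sub_add_val_eq_or b (a + 1)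
  have := Fin.val_sub_add_val_eq_or c (b + 1)
  have := Fin.val_sub_add_val_eq_or b a
  have := Fin.val_add_one_eq_or a
  have := Fin.val_add_one_eq_or b
  have : n ≠ 0 := fun h => NeZero.ne (2 * n) (by omega)
  have hba : b ≠ a := by rintro rfl; omega
  have hcb : c ≠ b := by rintro rfl; omega
  have hca : c ≠ a := by rintro rfl; omega
  calc 3 = ({a, b, c} : Finset _).card :=
        (Finset.card_eq_three.mpr ⟨a, b, c, hba.symm, hca.symm, hcb.symm, rfl⟩).symm
    _ ≤ δ.card := Finset.card_le_card (by simp [Finset.insert_subset_iff, ha, hb, hc])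

section

variable {m : ℕ}

def parityWeight (i : Fin m) : ℝ := if (i : ℕ) % 2 = 1 then 1 else 2

theorem one_le_parityWeight (i : Fin m) : 1 ≤ parityWeight i := by
  unfold parityWeight; split_ifs <;> norm_num

theorem card_le_sum_parityWeight (δ : Finset (Fin m)) :
    (δ.card : ℝ) ≤ ∑ i ∈ δ, parityWeight i := by
  simpa using δ.card_nsmul_le_sum _ 1 fun i _ => one_le_parityWeight i

theorem val_mod_two_eq_one_of_sum_parityWeight_lt_three {δ : Finset (Fin m)}
    (hlt : ∑ i ∈ δ, parityWeight i < 3) {a b : Fin m} (ha : a ∈ δ) (hb : b ∈ δ) (hab : a ≠ b) :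
    a.val % 2 = 1 := by
  have hpair : parityWeight a + parityWeight b ≤ ∑ i ∈ δ, parityWeight i := by
    rw [← Finset.sum_pair hab]
    exact Finset.sum_le_sum_of_subset_of_nonneg (by simp [Finset.insert_subset_iff, ha, hb])
      fun i _ _ => zero_le_one.trans (one_le_parityWeight i)
  by_contra h
  have hwa : parityWeight a = 2 := if_neg h
  linarith [one_le_parityWeight b]

end

theorem val_sub_ne_of_odd {n : ℕ} (hodd : Odd n) {a b : Fin (2 * n)} (ha : a.val % 2 = 1)
    (hb : b.val % 2 = 1) : (b - a).val ≠ n := by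
  have := Fin.val_sub_add_val_eq_or b a
  have := Nat.odd_iff.mp hodd
  omega

/-- Let `n ≥ 5` be odd and consider the cycle `C_{2n}` with terminal pairs
`{{v_i, v_{i+n}}}`. Edge `i` is `v_i v_{i+1}`; odd-indexed edges get weight `1`
and even-indexed edges weight `2`. Then every `S`-multicut has total weight at
least `3`. -/
theorem moebius_cycle_inequality_valid (n : ℕ) [NeZero (2 * n)] (hn : 5 ≤ n) (hodd : Odd n)
    (δ : Finset (Fin (2 * n)))
    (hmc : ∀ i : Fin (2 * n),
      ¬ ((cycleG (2 * n)).deleteEdges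
          ((fun i : Fin (2 * n) => s(i, i + 1)) '' (δ : Set (Fin (2 * n))))).Reachable
        i (i + Fin.ofNat (2 * n) n)) :
    3 ≤ ∑ i ∈ δ, (if (i : ℕ) % 2 = 1 then (1 : ℝ) else 2) := by
  change 3 ≤ ∑ i ∈ δ, parityWeight i
  by_contra! hlt
  have harc : ∀ i : Fin (2 * n), ∃ e ∈ δ, (e - i).val < n := by
    intro i
    by_contra! h
    exact hmc i (cycleG_deleteEdges_reachable (by omega) i (by omega) h)
  have hanti : ∀ a ∈ δ, ∀ b ∈ δ, (b - a).val ≠ n := by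
    intro a ha b hb
    rcases eq_or_ne a b with rfl | hab
    · simp only [sub_self, Fin.val_zero]
      omega
    · exact val_sub_ne_of_odd hodd (val_mod_two_eq_one_of_sum_parityWeight_lt_three hlt ha hb hab)
        (val_mod_two_eq_one_of_sum_parityWeight_lt_three hlt hb ha hab.symm)
  have hcard : (3 : ℝ) ≤ δ.card := mod_cast three_le_card_of_forall_exists_val_sub_lt harc hanti
  linarith [card_le_sum_parityWeight δ]
end
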